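/- arXiv:1908.08616 — 3 statements merged into one kernel-verified Lean document; each statement's English description precedes it below -/
import Mathlib

section
/- If a convex quadratic function q(x) = (1/2) xᵀQx + bᵀx (with Q symmetric positive semidefinite) is bounded from below on a nonempty polyhedron {x : Ax ≥ c}, then q attains its infimum on this polyhedron. -/
/-!
Induction on the dimension of the affine hull of the polyhedron `F`. Fix `x₀ ∈ F`. If the
sublevel set `F ∩ {q ≤ q x₀}` is bounded, it is compact and `q` attains its minimum there, hence
on `F`. Otherwise this closed convex set contains a ray `x₀ + t d` (`t ≥ 0`, `d ≠ 0`). As `q` is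
bounded on the ray, `Qd = 0` and `b ⬝ᵥ d = 0`, so `q` is invariant under translation by `d`, and
every constraint `c ≤ a ⬝ᵥ x` of `F` has `0 ≤ a ⬝ᵥ d`. If some `a ⬝ᵥ d > 0`, pushing each point of
`F` along `-d` until it reaches a facet `a ⬝ᵥ x = c` shows that the minimum over `F` is the least
of the minima over these facets; otherwise `F` is invariant under translation by `d`, and it
suffices to minimize over a hyperplane section transversal to `d`. These facets and sections have
affine hulls of smaller dimension, since `d` lies in the direction of `F` but not in theirs.
-/

open Matrix Finset Set Filter Module

theorem nonpos_of_forall_nonneg_mul_le {β M : ℝ} (h : ∀ t : ℝ, 0 ≤ t → β * t ≤ M) : β ≤ 0 := by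
  by_contra! hβ
  have := h ((|M| + 1) / β) (by positivity)
  rw [mul_div_cancel₀ _ hβ.ne'] at this
  linarith [le_abs_self M]

theorem eq_zero_of_forall_nonneg_mul_sq_add_mul_le {α β M : ℝ} (hα : 0 ≤ α)
    (h : ∀ t : ℝ, 0 ≤ t → α * t ^ 2 + β * t ≤ M) : α = 0 := by
  refine hα.antisymm' (not_lt.1 fun hα' => ?_)
  set t := (|β| + |M| + 1) / α + 1
  have ht : α * t = |β| + |M| + 1 + α := by simp only [t]; field_simp
  have h1 : 1 ≤ t := le_add_of_nonneg_left (by positivity)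
  have hgrowth : |M| + 1 ≤ α * t ^ 2 + β * t := by
    have hX : |M| + 1 ≤ α * t + β := by linarith [neg_abs_le β]
    calc |M| + 1 = 1 * (|M| + 1) := (one_mul _).symm
      _ ≤ t * (α * t + β) := mul_le_mul h1 hX (by positivity) (by linarith)
      _ = α * t ^ 2 + β * t := by ring
  linarith [h t (by linarith), le_abs_self M]

theorem finrank_vectorSpan_inter_hyperplane_lt {K E : Type*} [Field K] [AddCommGroup E] [Module K E]
    [FiniteDimensional K E] {F : Set E} {d : E} (hd : d ∈ vectorSpan K F) {w : Dual K E}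
    (hw : w d ≠ 0) (c : K) :
    finrank K (vectorSpan K (F ∩ {x | w x = c})) < finrank K (vectorSpan K F) := by
  refine Submodule.finrank_lt_finrank_of_lt
    (lt_of_le_of_ne (vectorSpan_mono K inter_subset_left) ?_)
  have hker : vectorSpan K (F ∩ {x | w x = c}) ≤ LinearMap.ker w := by
    rw [vectorSpan_def, Submodule.span_le]
    rintro _ ⟨x, hx, y, hy, rfl⟩
    show w (x - y) = 0
    rw [map_sub, (hx.2 : w x = c), (hy.2 : w y = c), sub_self]
  exact fun h => hw (hker (h ▸ hd))

theorem exists_ne_zero_forall_add_smul_mem {E : Type*} [NormedAddCommGroup E] [NormedSpace ℝ E]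
    [FiniteDimensional ℝ E] {S : Set E} (hSc : IsClosed S) (hS : Convex ℝ S)
    (hSb : ¬Bornology.IsBounded S) {x : E} (hx : x ∈ S) :
    ∃ d ≠ 0, ∀ t : ℝ, 0 ≤ t → x + t • d ∈ S := by
  have hfar : ∀ k : ℕ, ∃ y ∈ S, (k : ℝ) < ‖y - x‖ := by
    intro k
    by_contra! h
    exact hSb ((Metric.isBounded_closedBall (x := x) (r := k)).subset
      fun y hy => mem_closedBall_iff_norm.2 (h y hy))
  choose y hyS hy using hfar
  have hpos : ∀ k, 0 < ‖y k - x‖ := fun k => (Nat.cast_nonneg k).trans_lt (hy k)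
  have hu : ∀ k, ‖y k - x‖⁻¹ • (y k - x) ∈ Metric.sphere (0 : E) 1 := fun k => by
    simp [norm_smul, (hpos k).ne']
  obtain ⟨d, hd, φ, hφ, hlim⟩ := (isCompact_sphere (0 : E) 1).tendsto_subseq hu
  refine ⟨d, ne_zero_of_mem_unit_sphere ⟨d, hd⟩, fun t ht => ?_⟩
  refine hSc.mem_of_tendsto (tendsto_const_nhds.add (hlim.const_smul t)) ?_
  filter_upwards [eventually_ge_atTop ⌈t⌉₊] with k hk
  have htk : t ≤ ‖y (φ k) - x‖ :=
    (Nat.le_ceil t).trans ((Nat.cast_le.2 (hk.trans (hφ.id_le k))).trans (hy (φ k)).le)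
  have hθ : t / ‖y (φ k) - x‖ ∈ Icc (0 : ℝ) 1 :=
    ⟨div_nonneg ht (hpos _).le, div_le_one_of_le₀ htk (hpos _).le⟩
  convert hS.add_smul_sub_mem hx (hyS (φ k)) hθ using 2
  simp only [Function.comp_apply, smul_smul, div_eq_mul_inv]

theorem exists_isMinOn_of_isBounded_sublevel {X β : Type*} [PseudoMetricSpace X] [ProperSpace X]
    [LinearOrder β] [TopologicalSpace β] [ClosedIicTopology β] {f : X → β} (hf : Continuous f)
    {F : Set X} (hF : IsClosed F) {x₀ : X} (hx₀ : x₀ ∈ F)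
    (hS : Bornology.IsBounded (F ∩ {x | f x ≤ f x₀})) : ∃ z ∈ F, IsMinOn f F z := by
  refine hf.continuousOn.exists_isMinOn' hF hx₀ ?_
  rw [← Metric.cobounded_eq_cocompact]
  filter_upwards [mem_inf_of_left hS, mem_inf_of_right (mem_principal_self F)] with x hxS hxF
  by_contra! h
  exact hxS ⟨hxF, h.le⟩

theorem exists_isMinOn_of_forall_exists_le {α ι β : Type*} [LinearOrder β] {f : α → β}
    {F : Set α} {s : Finset ι} {G : ι → Set α} (hGF : ∀ i ∈ s, G i ⊆ F)
    (hG : ∀ i ∈ s, (G i).Nonempty → ∃ z ∈ G i, IsMinOn f (G i) z)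
    (hcover : ∀ x ∈ F, ∃ i ∈ s, ∃ y ∈ G i, f y ≤ f x) (hne : F.Nonempty) :
    ∃ z ∈ F, IsMinOn f F z := by
  classical
  have hmem : ∀ {i y}, i ∈ s → y ∈ G i → i ∈ s.filter fun i => (G i).Nonempty :=
    fun hi hy => mem_filter.2 ⟨hi, _, hy⟩
  have hG' : ∀ i ∈ s.filter fun i => (G i).Nonempty, ∃ z ∈ G i, IsMinOn f (G i) z :=
    fun i hi => hG i (mem_filter.1 hi).1 (mem_filter.1 hi).2
  obtain ⟨x₀, hx₀⟩ := hne
  have : Nonempty α := ⟨x₀⟩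
  choose! z hzG hz using hG'
  obtain ⟨i, hi, y, hy, -⟩ := hcover x₀ hx₀
  obtain ⟨i₀, hi₀, hmin⟩ := (s.filter fun i => (G i).Nonempty).exists_min_image
    (fun i => f (z i)) ⟨i, hmem hi hy⟩
  refine ⟨z i₀, hGF i₀ (mem_filter.1 hi₀).1 (hzG i₀ hi₀), fun x hx => ?_⟩
  obtain ⟨i, hi, y, hy, hyx⟩ := hcover x hx
  calc f (z i₀) ≤ f (z i) := hmin i (hmem hi hy)
    _ ≤ f y := hz i (hmem hi hy) hy
    _ ≤ f x := hyx

section Polyhedron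

variable {E : Type*} [AddCommGroup E] [Module ℝ E]

def polyhedron (s : Finset (Dual ℝ E × ℝ)) : Set E :=
  {x | ∀ p ∈ s, p.2 ≤ p.1 x}

def IsPolyhedron (F : Set E) : Prop :=
  ∃ s, polyhedron s = F

theorem IsPolyhedron.inter_halfspace {F : Set E} (hF : IsPolyhedron F) (f : Dual ℝ E) (c : ℝ) :
    IsPolyhedron (F ∩ {x | c ≤ f x}) := by
  classical
  obtain ⟨s, rfl⟩ := hF
  refine ⟨insert (f, c) s, ?_⟩
  ext x
  simp [polyhedron, and_comm]

theorem IsPolyhedron.inter_hyperplane {F : Set E} (hF : IsPolyhedron F) (f : Dual ℝ E) (c : ℝ) :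
    IsPolyhedron (F ∩ {x | f x = c}) := by
  convert (hF.inter_halfspace f c).inter_halfspace (-f) (-c) using 1
  ext x
  simp only [mem_inter_iff, mem_ofPred_eq, LinearMap.neg_apply, neg_le_neg_iff, le_antisymm_iff,
    and_assoc, and_comm (a := c ≤ f x)]

theorem convex_polyhedron (s : Finset (Dual ℝ E × ℝ)) : Convex ℝ (polyhedron s : Set E) := by
  intro x hx y hy a b ha hb hab p hp
  have hpx := mul_le_mul_of_nonneg_left (hx p hp) ha
  have hpy := mul_le_mul_of_nonneg_left (hy p hp) hb
  have hsplit : p.2 = a * p.2 + b * p.2 := by rw [← add_mul, hab, one_mul]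
  simp only [map_add, map_smul, smul_eq_mul]
  linarith

theorem isClosed_polyhedron [TopologicalSpace E] [IsTopologicalAddGroup E] [ContinuousSMul ℝ E]
    [T2Space E] [FiniteDimensional ℝ E] (s : Finset (Dual ℝ E × ℝ)) :
    IsClosed (polyhedron s : Set E) := by
  simp only [polyhedron, ofPred_forall]
  exact isClosed_biInter fun p _ =>
    isClosed_le continuous_const (LinearMap.continuous_of_finiteDimensional p.1)

theorem nonneg_of_forall_add_smul_mem_polyhedron {s : Finset (Dual ℝ E × ℝ)} {x d : E}
    (h : ∀ t : ℝ, 0 ≤ t → x + t • d ∈ polyhedron s) {p : Dual ℝ E × ℝ} (hp : p ∈ s) :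
    0 ≤ p.1 d := by
  refine neg_nonpos.1 (nonpos_of_forall_nonneg_mul_le (M := p.1 x - p.2) fun t ht => ?_)
  have := h t ht p hp
  simp only [map_add, map_smul, smul_eq_mul] at this
  linarith

theorem exists_sub_smul_mem_polyhedron_inter_hyperplane {s : Finset (Dual ℝ E × ℝ)} {x d : E}
    (hx : x ∈ polyhedron s) (hd : ∃ p ∈ s, 0 < p.1 d) :
    ∃ p ∈ s, 0 < p.1 d ∧ ∃ t : ℝ, x - t • d ∈ polyhedron s ∩ {y | p.1 y = p.2} := by
  classical
  obtain ⟨p, hpJ, hmin⟩ := (s.filter fun p => 0 < p.1 d).exists_min_image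
    (fun p => (p.1 x - p.2) / p.1 d) (let ⟨p, hp, hpd⟩ := hd; ⟨p, mem_filter.2 ⟨hp, hpd⟩⟩)
  obtain ⟨hp, hpd⟩ := mem_filter.1 hpJ
  have ht : 0 ≤ (p.1 x - p.2) / p.1 d := div_nonneg (sub_nonneg.2 (hx p hp)) hpd.le
  refine ⟨p, hp, hpd, (p.1 x - p.2) / p.1 d, fun q hq => ?_, ?_⟩
  · simp only [map_sub, map_smul, smul_eq_mul]
    by_cases hqd : 0 < q.1 d
    · have := (le_div_iff₀ hqd).1 (hmin q (mem_filter.2 ⟨hq, hqd⟩))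
      linarith
    · nlinarith [hx q hq]
  · simp only [mem_ofPred_eq, map_sub, map_smul, smul_eq_mul]
    field_simp
    ring

theorem exists_isMinOn_polyhedron_of_forall_add_smul_eq {β : Type*} [LinearOrder β] {f : E → β}
    {s : Finset (Dual ℝ E × ℝ)} {d : E} (hd : d ≠ 0) (hsd : ∀ p ∈ s, 0 ≤ p.1 d)
    (hf : ∀ x (t : ℝ), f (x + t • d) = f x) (hne : (polyhedron s).Nonempty)
    (hslice : ∀ (w : Dual ℝ E) (c : ℝ), w d ≠ 0 → (polyhedron s ∩ {x | w x = c}).Nonempty →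
      ∃ z ∈ polyhedron s ∩ {x | w x = c}, IsMinOn f (polyhedron s ∩ {x | w x = c}) z) :
    ∃ z ∈ polyhedron s, IsMinOn f (polyhedron s) z := by
  classical
  by_cases hJ : ∃ p ∈ s, 0 < p.1 d
  · refine exists_isMinOn_of_forall_exists_le (s := s.filter fun p => 0 < p.1 d)
      (G := fun p => polyhedron s ∩ {x | p.1 x = p.2}) (fun _ _ => inter_subset_left)
      (fun p hp => hslice p.1 p.2 (mem_filter.1 hp).2.ne') (fun x hx => ?_) hne
    obtain ⟨p, hp, hpd, t, hmem⟩ := exists_sub_smul_mem_polyhedron_inter_hyperplane hx hJ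
    refine ⟨p, mem_filter.2 ⟨hp, hpd⟩, _, hmem, ?_⟩
    rw [sub_eq_add_neg, ← neg_smul, hf]
  · -- Now `polyhedron s` is invariant under translation by `d`.
    push Not at hJ
    obtain ⟨w, hw⟩ : ∃ w : Dual ℝ E, w d ≠ 0 := by
      by_contra! h
      exact hd ((forall_dual_apply_eq_zero_iff ℝ d).1 h)
    obtain ⟨x₀, hx₀⟩ := hne
    obtain ⟨z, hz, hmin⟩ := hslice w (w x₀) hw ⟨x₀, hx₀, rfl⟩
    refine ⟨z, hz.1, fun x hx => ?_⟩
    have hslid : x + ((w x₀ - w x) / w d) • d ∈ polyhedron s ∩ {y | w y = w x₀} := by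
      refine ⟨fun p hp => ?_, ?_⟩
      · simp [le_antisymm (hJ p hp) (hsd p hp), hx p hp]
      · simp [field]
    simpa [hf] using hmin hslid

end Polyhedron

theorem Matrix.isPolyhedron_setOf_le_mulVec {m n : Type*} [Fintype m] [Fintype n]
    (A : Matrix m n ℝ) (c : m → ℝ) : IsPolyhedron {x : n → ℝ | ∀ i, c i ≤ (A *ᵥ x) i} := by
  classical
  refine ⟨univ.image fun i => (LinearMap.proj i ∘ₗ A.mulVecLin, c i), ?_⟩
  ext x
  simp [polyhedron]

section Quadratic

variable {n : Type*} [Fintype n] {Q : Matrix n n ℝ} {b : n → ℝ}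

noncomputable def quadFun (Q : Matrix n n ℝ) (b x : n → ℝ) : ℝ :=
  1 / 2 * (x ⬝ᵥ Q *ᵥ x) + b ⬝ᵥ x

theorem continuous_quadFun : Continuous (quadFun Q b) := by
  unfold quadFun
  simp only [dotProduct, mulVec]
  fun_prop

theorem quadFun_add_smul (hQ : Q.IsSymm) (x d : n → ℝ) (t : ℝ) :
    quadFun Q b (x + t • d) =
      quadFun Q b x + t * ((Q *ᵥ x + b) ⬝ᵥ d) + t ^ 2 * (1 / 2 * (d ⬝ᵥ Q *ᵥ d)) := by
  have hsymm : x ⬝ᵥ Q *ᵥ d = Q *ᵥ x ⬝ᵥ d := by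
    rw [← dotProduct_transpose_mulVec, hQ.eq, dotProduct_comm]
  simp only [quadFun, mulVec_add, mulVec_smul, add_dotProduct, dotProduct_add, smul_dotProduct,
    dotProduct_smul, smul_eq_mul, hsymm, dotProduct_comm d (Q *ᵥ x)]
  ring

theorem convexOn_quadFun (hQ : Q.PosSemidef) : ConvexOn ℝ univ (quadFun Q b) := by
  refine ⟨convex_univ, fun x _ y _ a c ha hc hac => ?_⟩
  have hsymm : Q.IsSymm := isHermitian_iff_isSymm.1 hQ.isHermitian
  have hcurv := hQ.dotProduct_mulVec_nonneg (y - x)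
  have hy := quadFun_add_smul (b := b) hsymm x (y - x) 1
  obtain rfl : a = 1 - c := by linarith
  have hxy : (1 - c) • x + c • y = x + c • (y - x) := by module
  rw [hxy, quadFun_add_smul hsymm, smul_eq_mul, smul_eq_mul]
  simp only [one_smul, add_sub_cancel, one_mul, one_pow, star_trivial] at hy hcurv
  have hc1 : c ^ 2 ≤ c := by nlinarith
  rw [hy]
  nlinarith [mul_le_mul_of_nonneg_right hc1 hcurv]

theorem quadFun_add_smul_eq_of_bounded_on_ray (hQ : Q.PosSemidef) {x₀ d : n → ℝ} {L M : ℝ}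
    (hle : ∀ t : ℝ, 0 ≤ t → quadFun Q b (x₀ + t • d) ≤ M)
    (hge : ∀ t : ℝ, 0 ≤ t → L ≤ quadFun Q b (x₀ + t • d)) (x : n → ℝ) (t : ℝ) :
    quadFun Q b (x + t • d) = quadFun Q b x := by
  have hsymm : Q.IsSymm := isHermitian_iff_isSymm.1 hQ.isHermitian
  have hcurv : 0 ≤ 1 / 2 * (d ⬝ᵥ Q *ᵥ d) := by
    simpa using hQ.dotProduct_mulVec_nonneg d
  have hflat : 1 / 2 * (d ⬝ᵥ Q *ᵥ d) = 0 :=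
    eq_zero_of_forall_nonneg_mul_sq_add_mul_le (β := (Q *ᵥ x₀ + b) ⬝ᵥ d) (M := M - quadFun Q b x₀)
      hcurv fun t ht => by linarith [hle t ht, quadFun_add_smul (b := b) hsymm x₀ d t]
  have hQd : Q *ᵥ d = 0 := by
    rw [← hQ.dotProduct_mulVec_zero_iff]
    simpa using hflat
  have hslope : ∀ y, (Q *ᵥ y + b) ⬝ᵥ d = b ⬝ᵥ d := fun y => by
    rw [add_dotProduct, dotProduct_comm, ← dotProduct_transpose_mulVec, hsymm.eq, hQd,
      dotProduct_zero, zero_add]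
  have hb_le : b ⬝ᵥ d ≤ 0 := nonpos_of_forall_nonneg_mul_le (M := M - quadFun Q b x₀)
    fun t ht => by
      have := quadFun_add_smul (b := b) hsymm x₀ d t
      rw [hslope, hflat, mul_zero, add_zero] at this
      linarith [hle t ht]
  have hb_ge : 0 ≤ b ⬝ᵥ d := neg_nonpos.1 <| nonpos_of_forall_nonneg_mul_le
    (M := quadFun Q b x₀ - L) fun t ht => by
      have := quadFun_add_smul (b := b) hsymm x₀ d t
      rw [hslope, hflat, mul_zero, add_zero] at this
      linarith [hge t ht]
  rw [quadFun_add_smul hsymm, hslope, hflat, le_antisymm hb_le hb_ge]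
  ring

theorem IsPolyhedron.exists_isMinOn_quadFun (hQ : Q.PosSemidef) {F : Set (n → ℝ)}
    (hF : IsPolyhedron F) (hne : F.Nonempty) (hbdd : BddBelow (quadFun Q b '' F)) :
    ∃ z ∈ F, IsMinOn (quadFun Q b) F z := by
  induction hk : finrank ℝ (vectorSpan ℝ F) using Nat.strong_induction_on generalizing F with
  | _ k ih =>
  obtain ⟨s, rfl⟩ := hF
  obtain ⟨x₀, hx₀⟩ := hne
  by_cases hS : Bornology.IsBounded (polyhedron s ∩ {x | quadFun Q b x ≤ quadFun Q b x₀})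
  · exact exists_isMinOn_of_isBounded_sublevel continuous_quadFun (isClosed_polyhedron s) hx₀ hS
  obtain ⟨d, hd, hray⟩ := exists_ne_zero_forall_add_smul_mem
    ((isClosed_polyhedron s).inter (isClosed_le continuous_quadFun continuous_const))
    ((convex_polyhedron s).inter (by simpa using (convexOn_quadFun hQ).convex_le _)) hS
    ⟨hx₀, le_refl (quadFun Q b x₀)⟩
  obtain ⟨L, hL⟩ := hbdd
  have hf := quadFun_add_smul_eq_of_bounded_on_ray hQ (fun t ht => (hray t ht).2)
    (fun t ht => hL ⟨_, (hray t ht).1, rfl⟩)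
  have hdF : d ∈ vectorSpan ℝ (polyhedron s) := by
    simpa using vsub_mem_vectorSpan ℝ (hray 1 zero_le_one).1 hx₀
  refine exists_isMinOn_polyhedron_of_forall_add_smul_eq hd
    (fun p hp => nonneg_of_forall_add_smul_mem_polyhedron (fun t ht => (hray t ht).1) hp) hf
    ⟨x₀, hx₀⟩ fun w c hw hslice => ?_
  exact ih _ (hk ▸ finrank_vectorSpan_inter_hyperplane_lt hdF hw c)
    (IsPolyhedron.inter_hyperplane ⟨s, rfl⟩ w c) hslice
    ⟨L, lowerBounds_mono_set (image_mono Set.inter_subset_left) hL⟩ rfl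

end Quadratic

/-- A convex quadratic function bounded below on a nonempty polyhedron attains
its infimum there (Frank–Wolfe type result). -/
theorem quadratic_attains_min_on_polyhedron (p q : ℕ)
    (Q : Matrix (Fin p) (Fin p) ℝ) (hQ : Q.PosSemidef)
    (b : Fin p → ℝ) (A : Matrix (Fin q) (Fin p) ℝ) (c : Fin q → ℝ)
    (F : Set (Fin p → ℝ))
    (hF : F = {x | ∀ i, c i ≤ A.mulVec x i})
    (hne : F.Nonempty)
    (obj : (Fin p → ℝ) → ℝ)
    (hobj : obj = fun x => (1 / 2) * (x ⬝ᵥ Q.mulVec x) + b ⬝ᵥ x)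
    (hbdd : ∃ L : ℝ, ∀ x ∈ F, L ≤ obj x) :
    ∃ xstar ∈ F, ∀ x ∈ F, obj xstar ≤ obj x := by
  subst hF hobj
  obtain ⟨L, hL⟩ := hbdd
  exact (A.isPolyhedron_setOf_le_mulVec c).exists_isMinOn_quadFun hQ hne
    ⟨L, forall_mem_image.2 hL⟩
end

section
/- Let x⁽¹⁾, …, x⁽ᵐ⁾ ∈ ℝⁿ and define X⁽ⁱ⁾ = Iₙ ⊗ (x⁽ⁱ⁾)ᵀ ∈ ℝ^{n×n²}. Then the matrix Σᵢ (X⁽ⁱ⁾)ᵀX⁽ⁱ⁾ − (1/m)(Σᵢ X⁽ⁱ⁾)ᵀ(Σᵢ X⁽ⁱ⁾) is positive semidefinite, and it is positive definite if the data matrix X (with rows (x⁽ⁱ⁾)ᵀ) has full column rank and the all-ones vector 1_m is not in the column space of X. -/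
/-!
With `X̄ = (1/m) ∑ᵢ X⁽ⁱ⁾`, the matrix equals `∑ᵢ (X⁽ⁱ⁾ - X̄)ᵀ (X⁽ⁱ⁾ - X̄)`, a sum of Gram
matrices, hence is positive semidefinite; it is definite as soon as the centred blocks
`X⁽ⁱ⁾ - X̄` have no common nonzero kernel vector. Splitting `v ∈ ℝ^{n²}` into blocks `u_p ∈ ℝⁿ`,
`X⁽ⁱ⁾` sends `v` to `(x⁽ⁱ⁾ · u_p)_p`, so a common kernel vector has `X u_p` constant for every
`p`. Since `1ₘ ∉ col(X)` this constant is `0`, and full column rank then gives `u_p = 0`.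
-/

open Matrix Finset Kronecker

namespace Matrix

variable {ι l p q : Type*} [Fintype ι]

theorem sum_conjTranspose_mul_self_sub_eq_sum_centered [Fintype p] {K : Type*} [Field K]
    [StarRing K] (A : ι → Matrix p q K) :
    (∑ i, (A i)ᴴ * A i) - (1 / (Fintype.card ι : K)) • ((∑ i, A i)ᴴ * ∑ i, A i) =
      ∑ i, (A i - (1 / (Fintype.card ι : K)) • ∑ j, A j)ᴴ *
        (A i - (1 / (Fintype.card ι : K)) • ∑ j, A j) := by
  set c : K := 1 / (Fintype.card ι : K)
  set S := ∑ i, A i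
  have hstar : star c = c := by simp [c]
  have hc : c * (c * Fintype.card ι) = c := by
    rcases eq_or_ne (Fintype.card ι : K) 0 with h | h
    · simp [c, h]
    · simp only [c]; field_simp
  simp only [conjTranspose_sub, conjTranspose_smul, hstar, Matrix.sub_mul, Matrix.mul_sub,
    Matrix.smul_mul, Matrix.mul_smul, Finset.sum_sub_distrib, ← Finset.smul_sum,
    ← Matrix.sum_mul, ← Matrix.mul_sum, ← conjTranspose_sum, Finset.sum_const, Finset.card_univ]
  rw [show ∑ a, A a = S from rfl, ← Nat.cast_smul_eq_nsmul K, smul_smul, smul_sub, smul_smul, hc,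
    sub_self, sub_zero]

theorem posDef_sum_conjTranspose_mul_self [Fintype p] [Fintype q] {R : Type*} [CommRing R]
    [PartialOrder R] [StarRing R] [StarOrderedRing R] [NoZeroDivisors R] (B : ι → Matrix p q R)
    (hB : ∀ v, (∀ i, B i *ᵥ v = 0) → v = 0) : (∑ i, (B i)ᴴ * B i).PosDef := by
  refine .of_dotProduct_mulVec_pos
    (posSemidef_sum _ fun i _ => posSemidef_conjTranspose_mul_self (B i)).isHermitian
    fun v hv => ?_
  obtain ⟨i, hi⟩ : ∃ i, B i *ᵥ v ≠ 0 := by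
    by_contra! h
    exact hv (hB v h)
  have hquad (j : ι) : star v ⬝ᵥ ((B j)ᴴ * B j) *ᵥ v = star (B j *ᵥ v) ⬝ᵥ (B j *ᵥ v) := by
    rw [← mulVec_mulVec, dotProduct_mulVec, star_mulVec]
  rw [sum_mulVec, dotProduct_sum]
  simp only [hquad]
  exact Finset.sum_pos' (fun j _ => dotProduct_star_self_nonneg _)
    ⟨i, Finset.mem_univ _, dotProduct_star_self_pos_iff.mpr hi⟩

theorem mulVec_injective_of_rank_eq_card [Fintype q] {K : Type*} [Field K] (X : Matrix p q K)
    (hX : X.rank = Fintype.card q) : Function.Injective X.mulVec := by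
  have hker : Module.finrank K (LinearMap.ker X.mulVecLin) = 0 := by
    have := LinearMap.finrank_range_add_finrank_ker X.mulVecLin
    rw [Module.finrank_fintype_fun_eq_card, ← Matrix.rank, hX] at this
    omega
  exact LinearMap.ker_eq_bot.mp (Submodule.finrank_eq_zero.mp hker)

theorem eq_zero_of_mulVec_eq_const [Fintype q] {K : Type*} [Field K] {X : Matrix p q K}
    (hX : Function.Injective X.mulVec) (h1 : ¬∃ u, X *ᵥ u = fun _ => 1) {u : q → K} {a : K}
    (hu : X *ᵥ u = fun _ => a) : u = 0 := by
  rcases eq_or_ne a 0 with rfl | ha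
  · exact hX (by rw [hu, mulVec_zero]; rfl)
  · refine absurd ⟨a⁻¹ • u, ?_⟩ h1
    rw [mulVec_smul, hu]
    funext i
    simp [ha]

theorem one_kronecker_replicateRow_mulVec_apply [Fintype l] [DecidableEq l] [Fintype q]
    {r R : Type*} [CommSemiring R] (w : q → R) (v : l × q → R) (i : l × r) :
    ((1 : Matrix l l R) ⊗ₖ replicateRow r w *ᵥ v) i = w ⬝ᵥ fun c => v (i.1, c) := by
  simp [mulVec, dotProduct, Fintype.sum_prod_type, one_apply, mul_comm]

theorem eq_zero_of_forall_centered_kronecker_mulVec_eq_zero [Fintype l] [DecidableEq l]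
    [Fintype q] {r K : Type*} [Nonempty r] [Field K] {X : Matrix ι q K}
    (hX : Function.Injective X.mulVec) (h1 : ¬∃ u, X *ᵥ u = fun _ => 1) (c : K)
    {v : l × q → K}
    (hv : ∀ i, ((1 : Matrix l l K) ⊗ₖ replicateRow r (X i) -
      c • ∑ j, (1 : Matrix l l K) ⊗ₖ replicateRow r (X j)) *ᵥ v = 0) : v = 0 := by
  obtain ⟨k⟩ := ‹Nonempty r›
  funext ⟨p, d⟩
  suffices (fun e => v (p, e)) = 0 from congrFun this d
  refine eq_zero_of_mulVec_eq_const hX h1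
    (a := c * ∑ j, (X *ᵥ fun e => v (p, e)) j) (funext fun i => ?_)
  have hvi := congrFun (hv i) (p, k)
  simp only [sub_mulVec, smul_mulVec, sum_mulVec, Pi.sub_apply, Pi.smul_apply, Finset.sum_apply,
    one_kronecker_replicateRow_mulVec_apply, smul_eq_mul, Pi.zero_apply, sub_eq_zero] at hvi
  exact hvi

end Matrix

/-- With `X⁽ⁱ⁾ = Iₙ ⊗ (x⁽ⁱ⁾)ᵀ`, the matrix
`∑ᵢ (X⁽ⁱ⁾)ᵀX⁽ⁱ⁾ − (1/m)(∑ᵢ X⁽ⁱ⁾)ᵀ(∑ᵢ X⁽ⁱ⁾)` is positive semidefinite, and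
positive definite when the data matrix `X` has full column rank and `1ₘ` is
not in its column space. -/
theorem centered_gram_posSemidef_and_posDef (m n : ℕ)
    (x : Fin m → Fin n → ℝ)
    (Xi : Fin m → Matrix (Fin n × Fin 1) (Fin n × Fin n) ℝ)
    (hXi : ∀ i, Xi i = (1 : Matrix (Fin n) (Fin n) ℝ) ⊗ₖ Matrix.replicateRow (Fin 1) (x i))
    (X : Matrix (Fin m) (Fin n) ℝ) (hX : ∀ i, X i = x i)
    (M : Matrix (Fin n × Fin n) (Fin n × Fin n) ℝ)
    (hM : M = (∑ i, (Xi i)ᵀ * Xi i) -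
      ((1 : ℝ) / m) • ((∑ i, Xi i)ᵀ * (∑ i, Xi i))) :
    M.PosSemidef ∧
      (X.rank = n → (¬∃ u : Fin n → ℝ, X.mulVec u = fun _ => 1) → M.PosDef) := by
  set B : Fin m → Matrix (Fin n × Fin 1) (Fin n × Fin n) ℝ :=
    fun i => Xi i - ((1 : ℝ) / m) • ∑ j, Xi j
  have hMB : M = ∑ i, (B i)ᴴ * B i := by
    simpa only [hM, conjTranspose_eq_transpose_of_trivial, Fintype.card_fin] using
      sum_conjTranspose_mul_self_sub_eq_sum_centered Xi
  refine ⟨hMB ▸ posSemidef_sum _ fun i _ => posSemidef_conjTranspose_mul_self (B i),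
    fun hrank h1 => hMB ▸ posDef_sum_conjTranspose_mul_self B fun v hv => ?_⟩
  have hXinj := mulVec_injective_of_rank_eq_card X (by rwa [Fintype.card_fin])
  obtain rfl : X = x := funext hX
  simp only [B, hXi] at hv
  exact eq_zero_of_forall_centered_kronecker_mulVec_eq_zero hXinj h1 _ hv
end

section
/- The soft-margin ℓ1-regularized quadratic surface SVM problem is always feasible and attains its minimum: for any finite data set {(x⁽ⁱ⁾, y⁽ⁱ⁾)} with y⁽ⁱ⁾ ∈ {−1,1}, and any λ, μ > 0, there exist (z*, c*, ξ*) minimizing (1/2)zᵀGz + λ‖Vz‖₁ + μΣᵢξᵢ subject to y⁽ⁱ⁾(zᵀr⁽ⁱ⁾ + c) ≥ 1 − ξᵢ and ξ ≥ 0. -/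
/-!
Eliminating the slacks (`ξ i = (1 - y i * (z ⬝ᵥ r i + c))⁺` is optimal), writing `G = Bᵀ B` and
`|t| = t⁺ + (-t)⁺`, the objective becomes a function `½‖A p‖² + ∑ cᵢ (ℓᵢ p + βᵢ)⁺` of
`p = (z, c)` with all `cᵢ > 0`. Such a function attains its minimum, by induction on the number
of hinge terms. It is invariant under the lineality space `L = ker A ∩ ⋂ ker ℓᵢ`, so it suffices
to minimize over a complement `K` of `L`. If a sublevel set in `K` is bounded, compactness gives
the minimum. Otherwise, being closed and convex, it contains a ray `s ↦ s • v` with `v ∈ K \ {0}`;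
boundedness along the ray forces `A v = 0` and `ℓᵢ v ≤ 0`, and `v ∉ L` gives some `ℓᵢ v < 0`.
Moving far along `v` kills exactly those hinges without changing the others, so the minimum of
the problem with those terms dropped (which is a lower bound) is attained.
-/

open Filter Finset

theorem Convex.exists_ray_subset_of_not_isBounded {E : Type*} [NormedAddCommGroup E]
    [NormedSpace ℝ E] [FiniteDimensional ℝ E] {S : Set E} (hS : Convex ℝ S) (hSc : IsClosed S)
    (h0 : 0 ∈ S) (hSb : ¬ Bornology.IsBounded S) :
    ∃ v ≠ 0, ∀ s : ℝ, 0 ≤ s → s • v ∈ S := by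
  have hfar : ∀ n : ℕ, ∃ x ∈ S, (n : ℝ) < ‖x‖ := by
    simp only [isBounded_iff_forall_norm_le, not_exists, not_forall, not_le, exists_prop] at hSb
    exact fun n => hSb n
  choose x hxS hxn using hfar
  have hx0 : ∀ n, 0 < ‖x n‖ := fun n => (Nat.cast_nonneg n).trans_lt (hxn n)
  have hu : ∀ n, ‖x n‖⁻¹ • x n ∈ Metric.sphere (0 : E) 1 := fun n => by
    simp [norm_smul, (hx0 n).ne']
  obtain ⟨v, hv, φ, hφ, hlim⟩ := (isCompact_sphere (0 : E) 1).tendsto_subseq hu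
  refine ⟨v, ne_zero_of_mem_unit_sphere ⟨v, hv⟩, fun s hs => ?_⟩
  refine hSc.mem_of_tendsto (hlim.const_smul s) ?_
  filter_upwards [hφ.tendsto_atTop.eventually_ge_atTop ⌈s⌉₊] with n hn
  have hsx : s ≤ ‖x (φ n)‖ :=
    (Nat.le_ceil s).trans ((Nat.cast_le.mpr hn).trans (hxn (φ n)).le)
  rw [Function.comp_apply, smul_smul]
  refine hS.smul_mem_of_zero_mem h0 (hxS _) ⟨by positivity, ?_⟩
  rw [← div_eq_mul_inv]
  exact div_le_one_of_le₀ hsx (norm_nonneg _)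

theorem nonpos_of_eventually_mul_le {a C : ℝ} (h : ∀ᶠ s in atTop, a * s ≤ C) : a ≤ 0 := by
  by_contra! ha
  obtain ⟨s, hle, hlt⟩ :=
    (h.and ((tendsto_id.const_mul_atTop ha).eventually_gt_atTop C)).exists
  exact (hlt.trans_le hle).false

variable {E F ι : Type*} [NormedAddCommGroup E] [NormedSpace ℝ E]
  [NormedAddCommGroup F] [NormedSpace ℝ F]

noncomputable def quadHinge (A : E →ₗ[ℝ] F) (J : Finset ι) (ℓ : ι → E →ₗ[ℝ] ℝ) (β c : ι → ℝ)
    (x : E) : ℝ :=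
  (1 / 2) * ‖A x‖ ^ 2 + ∑ i ∈ J, c i * (ℓ i x + β i)⁺

namespace quadHinge

variable (A : E →ₗ[ℝ] F) (ℓ : ι → E →ₗ[ℝ] ℝ) (β c : ι → ℝ)

theorem continuous [FiniteDimensional ℝ E] {J : Finset ι} : Continuous (quadHinge A J ℓ β c) := by
  have hA := A.continuous_of_finiteDimensional
  have hℓ := fun i => (ℓ i).continuous_of_finiteDimensional
  unfold quadHinge
  fun_prop

theorem convexOn {J : Finset ι} (hc : ∀ i ∈ J, 0 ≤ c i) :
    ConvexOn ℝ Set.univ (quadHinge A J ℓ β c) := by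
  have hquad : ConvexOn ℝ Set.univ fun x => (1 / 2 : ℝ) * ‖A x‖ ^ 2 :=
    (((convexOn_norm convex_univ).comp_linearMap A).pow (fun _ _ => norm_nonneg _) 2).smul
      (by norm_num)
  have hhinge : ∀ i ∈ J, ConvexOn ℝ Set.univ fun x => c i * (ℓ i x + β i)⁺ := fun i hi =>
    ((((ℓ i).convexOn convex_univ).add_const (β i)).sup (convexOn_const 0 convex_univ)).smul
      (hc i hi)
  have hsum : ConvexOn ℝ Set.univ (∑ i ∈ J, fun x => c i * (ℓ i x + β i)⁺) :=
    Finset.sum_induction _ (ConvexOn ℝ Set.univ) (fun _ _ => ConvexOn.add)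
      (convexOn_const 0 convex_univ) hhinge
  refine (hquad.add hsum).congr fun x _ => ?_
  simp only [quadHinge, Pi.add_apply, Finset.sum_apply]

theorem le_of_subset {J' J : Finset ι} (hJ : J' ⊆ J) (hc : ∀ i ∈ J, 0 ≤ c i) (x : E) :
    quadHinge A J' ℓ β c x ≤ quadHinge A J ℓ β c x := by
  unfold quadHinge
  gcongr 1
  exact Finset.sum_le_sum_of_subset_of_nonneg hJ fun i hi _ =>
    mul_nonneg (hc i hi) (posPart_nonneg _)

theorem half_sq_norm_le {J : Finset ι} (hc : ∀ i ∈ J, 0 ≤ c i) (x : E) :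
    (1 / 2) * ‖A x‖ ^ 2 ≤ quadHinge A J ℓ β c x := by
  simpa [quadHinge] using le_of_subset A ℓ β c (Finset.empty_subset J) hc x

theorem mul_posPart_le {J : Finset ι} (hc : ∀ i ∈ J, 0 ≤ c i) {i : ι} (hi : i ∈ J) (x : E) :
    c i * (ℓ i x + β i)⁺ ≤ quadHinge A J ℓ β c x := by
  have := le_of_subset A ℓ β c (Finset.singleton_subset_iff.mpr hi) hc x
  simp only [quadHinge, Finset.sum_singleton] at this ⊢
  linarith [sq_nonneg ‖A x‖]

theorem add_eq_of_mem_ker {J : Finset ι} {w : E} (hAw : A w = 0) (hℓw : ∀ i ∈ J, ℓ i w = 0)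
    (x : E) : quadHinge A J ℓ β c (x + w) = quadHinge A J ℓ β c x := by
  unfold quadHinge
  rw [map_add, hAw, add_zero]
  congr 1
  refine Finset.sum_congr rfl fun i hi => ?_
  rw [map_add, hℓw i hi, add_zero]

theorem map_eq_zero_of_ray {J : Finset ι} {v : E}
    (hray : ∀ s : ℝ, 0 ≤ s → quadHinge A J ℓ β c (s • v) ≤ quadHinge A J ℓ β c 0)
    (hc : ∀ i ∈ J, 0 ≤ c i) : A v = 0 := by
  have hlin : ∀ᶠ s in atTop, (1 / 2 * ‖A v‖ ^ 2) * s ≤ quadHinge A J ℓ β c 0 := by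
    filter_upwards [eventually_ge_atTop 1] with s hs
    have hquad := (half_sq_norm_le A ℓ β c hc (s • v)).trans (hray s (by linarith))
    rw [map_smul, norm_smul, Real.norm_of_nonneg (by linarith)] at hquad
    nlinarith [sq_nonneg ‖A v‖]
  have hsq : ‖A v‖ ^ 2 ≤ 0 := by linarith [nonpos_of_eventually_mul_le hlin]
  simpa using hsq

theorem apply_nonpos_of_ray {J : Finset ι} {v : E}
    (hray : ∀ s : ℝ, 0 ≤ s → quadHinge A J ℓ β c (s • v) ≤ quadHinge A J ℓ β c 0)
    (hc : ∀ i ∈ J, 0 < c i) {i : ι} (hi : i ∈ J) : ℓ i v ≤ 0 := by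
  have hlin : ∀ᶠ s in atTop, (c i * ℓ i v) * s ≤ quadHinge A J ℓ β c 0 - c i * β i := by
    filter_upwards [eventually_ge_atTop 0] with s hs
    have hterm := (mul_posPart_le A ℓ β c (fun j hj => (hc j hj).le) hi (s • v)).trans
      (hray s hs)
    have := mul_le_mul_of_nonneg_left (le_posPart (ℓ i (s • v) + β i)) (hc i hi).le
    rw [map_smul, smul_eq_mul] at this hterm
    linarith
  exact nonpos_of_mul_nonpos_right (by linarith [nonpos_of_eventually_mul_le hlin]) (hc i hi)

theorem exists_add_smul_eq_filter {J : Finset ι} {v : E} (hAv : A v = 0)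
    (hℓv : ∀ i ∈ J, ℓ i v ≤ 0) (x : E) :
    ∃ s : ℝ, quadHinge A J ℓ β c (x + s • v) = quadHinge A {i ∈ J | ℓ i v = 0} ℓ β c x := by
  have hfar : ∀ᶠ s in atTop, ∀ i ∈ J, ℓ i v ≠ 0 → ℓ i x + s * ℓ i v + β i ≤ 0 := by
    refine (eventually_all_finset J).mpr fun i hi => ?_
    rcases (hℓv i hi).lt_or_eq with hneg | hzero
    · have := (tendsto_id.atTop_mul_const_of_neg hneg).eventually_le_atBot (-(ℓ i x + β i))
      filter_upwards [this] with s hs _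
      simp only [id] at hs
      linarith
    · exact Eventually.of_forall fun _ h => absurd hzero h
  obtain ⟨s, hs⟩ := hfar.exists
  refine ⟨s, ?_⟩
  simp only [quadHinge, map_add, map_smul, hAv, smul_zero, add_zero, Finset.sum_filter,
    smul_eq_mul]
  congr 1
  refine Finset.sum_congr rfl fun i hi => ?_
  split_ifs with h
  · rw [h, mul_zero, add_zero]
  · rw [posPart_eq_zero.mpr (hs i hi h), mul_zero]

theorem exists_forall_le [FiniteDimensional ℝ E] (J : Finset ι) (hc : ∀ i ∈ J, 0 < c i) :
    ∃ x₀, ∀ x, quadHinge A J ℓ β c x₀ ≤ quadHinge A J ℓ β c x := by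
  classical
  induction J using Finset.strongInduction with
  | H J ih =>
  obtain ⟨K, hLK⟩ := (LinearMap.ker A ⊓ ⨅ i ∈ J, LinearMap.ker (ℓ i)).exists_isCompl
  let g := quadHinge (A ∘ₗ K.subtype) J (fun i => ℓ i ∘ₗ K.subtype) β c
  have hg : ConvexOn ℝ Set.univ g := convexOn _ _ _ _ fun i hi => (hc i hi).le
  by_cases hbdd : Bornology.IsBounded {p | g p ≤ g 0}
  · obtain ⟨p₀, hp₀⟩ := (continuous _ _ _ _).exists_forall_le_of_isBounded 0 hbdd
    refine ⟨p₀, fun x => ?_⟩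
    obtain ⟨w, hw, p, hp, rfl⟩ :=
      Submodule.mem_sup.mp (hLK.sup_eq_top ▸ Submodule.mem_top : x ∈ _)
    simp only [Submodule.mem_inf, LinearMap.mem_ker, Submodule.mem_iInf] at hw
    rw [add_comm, add_eq_of_mem_ker A ℓ β c hw.1 hw.2]
    exact hp₀ ⟨p, hp⟩
  · obtain ⟨v, hv0, hray⟩ := Convex.exists_ray_subset_of_not_isBounded
      (by simpa using hg.convex_le (g 0)) (isClosed_le (continuous _ _ _ _) continuous_const)
      (le_refl (g 0)) hbdd
    have hAv : A v = 0 := map_eq_zero_of_ray _ _ _ _ hray fun i hi => (hc i hi).le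
    have hℓv : ∀ i ∈ J, ℓ i v ≤ 0 := fun i => apply_nonpos_of_ray _ _ _ _ hray hc
    have hdrop : ∃ i ∈ J, ℓ i v ≠ 0 := by
      by_contra! hall
      refine hv0 (Subtype.ext (Submodule.disjoint_def.mp hLK.disjoint v ?_ v.2))
      simpa [Submodule.mem_inf, Submodule.mem_iInf] using ⟨hAv, hall⟩
    obtain ⟨x₀, hx₀⟩ := ih _ (Finset.filter_ssubset.mpr hdrop) fun i hi =>
      hc i (Finset.mem_filter.mp hi).1
    obtain ⟨s, hs⟩ := exists_add_smul_eq_filter A ℓ β c hAv hℓv x₀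
    exact ⟨x₀ + s • v, fun x => hs.trans_le ((hx₀ x).trans
      (le_of_subset A ℓ β c (Finset.filter_subset _ J) (fun i hi => (hc i hi).le) x))⟩

end quadHinge

open Matrix

open scoped MatrixOrder in
theorem Matrix.PosSemidef.exists_eq_transpose_mul_self {n : Type*} [Fintype n]
    {G : Matrix n n ℝ} (hG : G.PosSemidef) : ∃ B : Matrix n n ℝ, G = Bᵀ * B := by
  classical
  obtain ⟨B, rfl⟩ := CStarAlgebra.nonneg_iff_eq_star_mul_self.mp hG.nonneg
  exact ⟨B, by rw [star_eq_conjTranspose, conjTranspose_eq_transpose_of_trivial]⟩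

section SVM

variable {d k m : ℕ}

noncomputable def svmQuadMap (B : Matrix (Fin d) (Fin d) ℝ) :
    (Fin d → ℝ) × ℝ →ₗ[ℝ] EuclideanSpace ℝ (Fin d) :=
  (WithLp.linearEquiv 2 ℝ (Fin d → ℝ)).symm.toLinearMap ∘ₗ B.mulVecLin ∘ₗ LinearMap.fst ℝ _ ℝ

def svmForm (V : Matrix (Fin k) (Fin d) ℝ) (r : Fin m → Fin d → ℝ) (y : Fin m → ℝ) :
    (Fin k ⊕ Fin k) ⊕ Fin m → (Fin d → ℝ) × ℝ →ₗ[ℝ] ℝ :=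
  let row j := LinearMap.proj j ∘ₗ V.mulVecLin ∘ₗ LinearMap.fst ℝ _ ℝ
  Sum.elim (Sum.elim row (fun j => -row j)) fun i =>
    -y i • (LinearMap.proj i ∘ₗ (Matrix.of r).mulVecLin ∘ₗ LinearMap.fst ℝ _ ℝ
      + LinearMap.snd ℝ _ ℝ)

def svmOffset : (Fin k ⊕ Fin k) ⊕ Fin m → ℝ := Sum.elim 0 1

def svmWeight (lam mu : ℝ) : (Fin k ⊕ Fin k) ⊕ Fin m → ℝ := Sum.elim (fun _ => lam) fun _ => mu

theorem quadHinge_svm (B : Matrix (Fin d) (Fin d) ℝ) (V : Matrix (Fin k) (Fin d) ℝ)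
    (r : Fin m → Fin d → ℝ) (y : Fin m → ℝ) (lam mu : ℝ) (z : Fin d → ℝ) (c : ℝ) :
    quadHinge (svmQuadMap B) univ (svmForm V r y) svmOffset (svmWeight lam mu) (z, c) =
      1 / 2 * (z ⬝ᵥ (Bᵀ * B) *ᵥ z) + lam * ∑ j, |(V *ᵥ z) j|
        + mu * ∑ i, (1 - y i * (z ⬝ᵥ r i + c))⁺ := by
  have hquad : ‖svmQuadMap B (z, c)‖ ^ 2 = z ⬝ᵥ (Bᵀ * B) *ᵥ z := by
    rw [EuclideanSpace.real_norm_sq_eq, ← mulVec_mulVec, dotProduct_mulVec, vecMul_transpose]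
    simp [svmQuadMap, dotProduct, sq]
  have hrow : ∀ j, svmForm V r y (.inl (.inl j)) (z, c) = (V *ᵥ z) j := fun _ => rfl
  have hrowNeg : ∀ j, svmForm V r y (.inl (.inr j)) (z, c) = -(V *ᵥ z) j := fun _ => rfl
  have hmargin : ∀ i, svmForm V r y (.inr i) (z, c) = -y i * (r i ⬝ᵥ z + c) := fun _ => rfl
  simp only [quadHinge, hquad, Fintype.sum_sum_type, hrow, hrowNeg, hmargin, svmOffset,
    svmWeight, Sum.elim_inl, Sum.elim_inr, Pi.zero_apply, Pi.one_apply, add_zero, ← mul_sum,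
    ← sum_add_distrib, posPart_neg, posPart_add_negPart, dotProduct_comm (r _), neg_mul,
    neg_add_eq_sub, add_assoc]

end SVM

theorem l1_sqssvm_solution_existence_general (d m k : ℕ)
    (G : Matrix (Fin d) (Fin d) ℝ) (hG : G.PosSemidef)
    (V : Matrix (Fin k) (Fin d) ℝ)
    (r : Fin m → Fin d → ℝ) (y : Fin m → ℝ)
    (lam mu : ℝ) (hlam : 0 < lam) (hmu : 0 < mu)
    (obj : (Fin d → ℝ) → ℝ → (Fin m → ℝ) → ℝ)
    (hobj : obj = fun z c xi =>
      (1 / 2) * (z ⬝ᵥ G.mulVec z) + lam * (∑ j, |V.mulVec z j|) + mu * ∑ i, xi i)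
    (Feas : (Fin d → ℝ) → ℝ → (Fin m → ℝ) → Prop)
    (hFeas : Feas = fun z c xi =>
      (∀ i, 0 ≤ xi i) ∧ ∀ i, 1 - xi i ≤ y i * (z ⬝ᵥ r i + c)) :
    ∃ z c xi, Feas z c xi ∧
      ∀ z' c' xi', Feas z' c' xi' → obj z c xi ≤ obj z' c' xi' := by
  subst hobj hFeas
  obtain ⟨B, rfl⟩ := hG.exists_eq_transpose_mul_self
  obtain ⟨⟨z, c⟩, hmin⟩ := quadHinge.exists_forall_le (svmQuadMap B) (svmForm V r y) svmOffset
    (svmWeight lam mu) univ fun i _ => by rcases i with (_ | _) | _ <;> assumption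
  refine ⟨z, c, fun i => (1 - y i * (z ⬝ᵥ r i + c))⁺,
    ⟨fun i => posPart_nonneg _, fun i => sub_le_comm.mp (le_posPart _)⟩, ?_⟩
  rintro z' c' xi' ⟨hxi_nonneg, hxi_margin⟩
  have hslack : ∑ i, (1 - y i * (z' ⬝ᵥ r i + c'))⁺ ≤ ∑ i, xi' i :=
    sum_le_sum fun i _ => sup_le (by linarith [hxi_margin i]) (hxi_nonneg i)
  have hcompare := hmin (z', c')
  rw [quadHinge_svm, quadHinge_svm] at hcompare
  dsimp only
  linarith [mul_le_mul_of_nonneg_left hslack hmu.le]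

/-- The soft-margin ℓ1-regularized quadratic surface SVM is always feasible
and attains its minimum. -/
theorem l1_sqssvm_solution_existence (d m k : ℕ)
    (G : Matrix (Fin d) (Fin d) ℝ) (hG : G.PosSemidef)
    (V : Matrix (Fin k) (Fin d) ℝ)
    (r : Fin m → Fin d → ℝ) (y : Fin m → ℝ)
    (hy : ∀ i, y i = 1 ∨ y i = -1)
    (lam mu : ℝ) (hlam : 0 < lam) (hmu : 0 < mu)
    (obj : (Fin d → ℝ) → ℝ → (Fin m → ℝ) → ℝ)
    (hobj : obj = fun z c xi =>
      (1 / 2) * (z ⬝ᵥ G.mulVec z) + lam * (∑ j, |V.mulVec z j|) + mu * ∑ i, xi i)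
    (Feas : (Fin d → ℝ) → ℝ → (Fin m → ℝ) → Prop)
    (hFeas : Feas = fun z c xi =>
      (∀ i, 0 ≤ xi i) ∧ ∀ i, 1 - xi i ≤ y i * (z ⬝ᵥ r i + c)) :
    ∃ z c xi, Feas z c xi ∧
      ∀ z' c' xi', Feas z' c' xi' → obj z c xi ≤ obj z' c' xi' :=
  l1_sqssvm_solution_existence_general d m k G hG V r y lam mu hlam hmu obj hobj Feas hFeas
end
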